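/- Define f(t) := ∫₀¹ sin(u·t)·T_{2n}(u)/√(1−u²) du and for the indices shifted by one define the analogous integrals with T_{2n±1} and cosine. Then the Chebyshev recurrence T_{2n+1}(x) + T_{2n−1}(x) = 2x·T_{2n}(x) implies the differentiation formula 2·s′_{0,2n}(t) = (2n−1)·s_{−1,2n−1}(t) − (2n+1)·s_{−1,2n+1}(t), where s_{0,2n}(t) = (−1)ⁿ ∫₀¹ sin(ut)T_{2n}(u)/√(1−u²) du and s_{−1,2m+1}(t) = (−1)^{m+1}/(2m+1) ∫₀¹ cos(ut)T_{2m+1}(u)/√(1−u²) du. -/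

import Mathlib

/-!
Differentiating under the integral sign is legitimate because the `t`-derivative
`u cos(ut) T_{2n}(u) / √(1 - u²)` is dominated by `|u T_{2n}(u)| / √(1 - u²)`, which is integrable:
`1 / √(1 - u²)` is the derivative of `arcsin`. The recurrence
`2u T_{2n}(u) = T_{2n+1}(u) + T_{2n-1}(u)` then splits `2 s′_{0,2n}` into the two cosine integrals.
-/

open Real Polynomial

/-- `s_{0,2n}(t)` as the integral `(-1)^n ∫₀¹ sin(ut) T_{2n}(u)/√(1-u²) du`. -/
noncomputable def s0 (n : ℕ) (t : ℝ) : ℝ :=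
  (-1 : ℝ) ^ n * ∫ u in (0:ℝ)..1,
    Real.sin (u * t) * (Polynomial.Chebyshev.T ℝ (2 * n)).eval u / Real.sqrt (1 - u ^ 2)

/-- `s_{-1,2m+1}(t)` as the integral `(-1)^{m+1}/(2m+1) ∫₀¹ cos(ut) T_{2m+1}(u)/√(1-u²) du`. -/
noncomputable def sneg1 (m : ℕ) (t : ℝ) : ℝ :=
  (-1 : ℝ) ^ (m + 1) / (2 * (m : ℝ) + 1) * ∫ u in (0:ℝ)..1,
    Real.cos (u * t) * (Polynomial.Chebyshev.T ℝ (2 * m + 1)).eval u / Real.sqrt (1 - u ^ 2)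

open MeasureTheory Set

theorem intervalIntegrable_one_div_sqrt_one_sub_sq :
    IntervalIntegrable (fun u : ℝ => 1 / √(1 - u ^ 2)) volume (-1) 1 := by
  rw [intervalIntegrable_iff_integrableOn_Ioc_of_le (by norm_num)]
  exact intervalIntegral.integrableOn_deriv_of_nonneg continuous_arcsin.continuousOn
    (fun x hx => hasDerivAt_arcsin hx.1.ne' hx.2.ne) (fun x _ => by positivity)

theorem ContinuousOn.intervalIntegrable_div_sqrt_one_sub_sq {g : ℝ → ℝ}
    (hg : ContinuousOn g (Icc 0 1)) :
    IntervalIntegrable (fun u => g u / √(1 - u ^ 2)) volume 0 1 := by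
  have hsub : uIcc (0 : ℝ) 1 ⊆ uIcc (-1) 1 := by
    rw [uIcc_of_le zero_le_one, uIcc_of_le (by norm_num)]
    exact Icc_subset_Icc_left (by norm_num)
  simpa only [mul_one_div] using (intervalIntegrable_one_div_sqrt_one_sub_sq.mono_set
    hsub).continuousOn_mul (uIcc_of_le (zero_le_one' ℝ) ▸ hg)

theorem hasDerivAt_integral_sin_mul {w : ℝ → ℝ} {a b : ℝ} (hw : IntervalIntegrable w volume a b)
    (t : ℝ) :
    HasDerivAt (fun x => ∫ u in a..b, sin (u * x) * w u)
      (∫ u in a..b, u * cos (u * t) * w u) t := by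
  have hmeas : ∀ {φ : ℝ → ℝ}, Continuous φ →
      AEStronglyMeasurable (fun u => φ u * w u) (volume.restrict (uIoc a b)) := fun hφ =>
    hφ.aestronglyMeasurable.mul hw.def'.aestronglyMeasurable
  refine (intervalIntegral.hasDerivAt_integral_of_dominated_loc_of_deriv_le
    (F := fun x u => sin (u * x) * w u) (F' := fun x u => u * cos (u * x) * w u)
    (bound := fun u => |u| * |w u|) Filter.univ_mem
    (Filter.Eventually.of_forall fun x => hmeas (φ := fun u => sin (u * x)) (by fun_prop))
    (hw.continuousOn_mul (by fun_prop)) (hmeas (φ := fun u => u * cos (u * t)) (by fun_prop)) ?_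
    (hw.abs.continuousOn_mul continuous_abs.continuousOn) ?_).2
  · refine Filter.Eventually.of_forall fun u _ x _ => ?_
    rw [norm_mul, norm_mul, Real.norm_eq_abs, Real.norm_eq_abs, Real.norm_eq_abs]
    gcongr
    exact mul_le_of_le_one_right (abs_nonneg u) (abs_cos_le_one (u * x))
  · refine Filter.Eventually.of_forall fun u _ x _ => ?_
    simpa [mul_comm] using ((hasDerivAt_id x).const_mul u).sin.mul_const (w u)

theorem hasDerivAt_s0 (n : ℕ) (t : ℝ) :
    HasDerivAt (s0 n) ((-1) ^ n * ∫ u in 0..1,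
      u * cos (u * t) * (Chebyshev.T ℝ (2 * n)).eval u / √(1 - u ^ 2)) t := by
  have hw : IntervalIntegrable (fun u => (Chebyshev.T ℝ (2 * n)).eval u / √(1 - u ^ 2))
      volume 0 1 :=
    (Chebyshev.T ℝ (2 * n)).continuous.continuousOn.intervalIntegrable_div_sqrt_one_sub_sq
  unfold s0
  simpa only [mul_div_assoc] using (hasDerivAt_integral_sin_mul hw t).const_mul ((-1) ^ n)

theorem sneg1_sub_one {n : ℕ} (hn : 1 ≤ n) (t : ℝ) :
    sneg1 (n - 1) t = (-1) ^ n / (2 * n - 1) * ∫ u in 0..1,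
      cos (u * t) * (Chebyshev.T ℝ (2 * n - 1)).eval u / √(1 - u ^ 2) := by
  have hidx : 2 * ((n - 1 : ℕ) : ℤ) + 1 = 2 * n - 1 := by omega
  have hcoeff : 2 * ((n - 1 : ℕ) : ℝ) + 1 = 2 * n - 1 := by
    rw [Nat.cast_sub hn]
    ring
  simp only [sneg1, Nat.sub_add_cancel hn, hidx, hcoeff]

theorem stmt5 (n : ℕ) (hn : 1 ≤ n)
    (hcheb : ∀ x : ℝ, (Polynomial.Chebyshev.T ℝ (2 * n + 1)).eval x +
      (Polynomial.Chebyshev.T ℝ (2 * n - 1)).eval x =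
      2 * x * (Polynomial.Chebyshev.T ℝ (2 * n)).eval x) :
    ∀ t : ℝ, 2 * deriv (s0 n) t =
      (2 * (n : ℝ) - 1) * sneg1 (n - 1) t - (2 * (n : ℝ) + 1) * sneg1 n t := by
  intro t
  set I : ℤ → ℝ := fun k => ∫ u in 0..1, cos (u * t) * (Chebyshev.T ℝ k).eval u / √(1 - u ^ 2)
  have hI (k : ℤ) : IntervalIntegrable
      (fun u => cos (u * t) * (Chebyshev.T ℝ k).eval u / √(1 - u ^ 2)) volume 0 1 :=
    ContinuousOn.intervalIntegrable_div_sqrt_one_sub_sq (by fun_prop)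
  have hrec : 2 * ∫ u in 0..1, u * cos (u * t) * (Chebyshev.T ℝ (2 * n)).eval u / √(1 - u ^ 2) =
      I (2 * n + 1) + I (2 * n - 1) := by
    rw [← intervalIntegral.integral_add (hI _) (hI _), ← intervalIntegral.integral_const_mul]
    refine intervalIntegral.integral_congr fun u _ => ?_
    linear_combination (-(cos (u * t) / √(1 - u ^ 2))) * hcheb u
  have hpos : (0 : ℝ) < 2 * n - 1 := by
    have : (1 : ℝ) ≤ n := by exact_mod_cast hn
    linarith
  rw [(hasDerivAt_s0 n t).deriv, sneg1_sub_one hn, mul_left_comm, hrec]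
  change _ = (2 * n - 1) * ((-1) ^ n / (2 * n - 1) * I (2 * n - 1)) -
    (2 * n + 1) * ((-1) ^ (n + 1) / (2 * n + 1) * I (2 * n + 1))
  field_simp
  ring
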